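/- arXiv:math/0401252 — 2 statements merged into one kernel-verified Lean document; each statement's English description precedes it below -/
import Mathlib

section
/- For every integer n ≥ 0, the sum over k from 0 to n of q^k times the Gaussian binomial coefficient [n choose k] with base q^2 equals the product over k from 1 to n of (1 + q^k). -/
/-- Finite q-Pochhammer symbol `(x;q)_n = ∏_{k=0}^{n-1} (1 - x q^k)`. -/
noncomputable def qPoch (x q : ℂ) (n : ℕ) : ℂ := ∏ k ∈ Finset.range n, (1 - x * q ^ k)

/-- Infinite q-Pochhammer symbol `(x;q)_∞ = ∏_{k≥0} (1 - x q^k)`. -/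
noncomputable def qPochInf (x q : ℂ) : ℂ := ∏' k : ℕ, (1 - x * q ^ k)

/-- Gaussian binomial coefficient `[n choose k]_q`, via the q-Pascal recurrence. -/
def gb (q : ℂ) : ℕ → ℕ → ℂ
  | _, 0 => 1
  | 0, _ + 1 => 0
  | n + 1, k + 1 => gb q n k + q ^ (k + 1) * gb q n (k + 1)

lemma gb_zero (q : ℂ) : ∀ n k, n < k → gb q n k = 0 := by
  intro n
  induction n with
  | zero =>
    intro k hk
    cases k with
    | zero => omega
    | succ k => rfl
  | succ n ih =>
    intro k hk
    cases k with
    | zero => omega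
    | succ k =>
      show gb q n k + q ^ (k + 1) * gb q n (k + 1) = 0
      rw [ih k (by omega), ih (k+1) (by omega)]
      ring

lemma gb_zero_right (q : ℂ) (n : ℕ) : gb q n 0 = 1 := by
  cases n <;> rfl

lemma gb_succ_succ (q : ℂ) (n k : ℕ) :
    gb q (n+1) (k+1) = gb q n k + q ^ (k + 1) * gb q n (k + 1) := rfl

lemma gb_absorb (q : ℂ) : ∀ n k, (1 - q ^ (k+1)) * gb q n (k+1) = (1 - q ^ (n - k)) * gb q n k := by
  intro n
  induction n with
  | zero =>
    intro k
    cases k with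
    | zero => simp [gb_zero q 0 1 (by omega), gb_zero_right]
    | succ k => simp [gb_zero q 0 (k+2) (by omega), gb_zero q 0 (k+1) (by omega)]
  | succ n ih =>
    intro k
    rcases le_or_gt k n with h | h
    · cases k with
      | zero =>
        have h0 := ih 0
        simp only [Nat.sub_zero, gb_zero_right, mul_one] at h0 ⊢
        rw [gb_succ_succ, gb_zero_right]
        linear_combination q * h0
      | succ j =>
        obtain ⟨d, hd⟩ : ∃ d, n = j + 1 + d := ⟨n - (j+1), by omega⟩
        subst hd
        have h1 := ih (j+1)
        have h2 := ih j
        rw [show j + 1 + d - (j + 1) = d from by omega] at h1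
        rw [show j + 1 + d - j = d + 1 from by omega] at h2
        rw [show j + 1 + d + 1 - (j + 1) = d + 1 from by omega]
        rw [gb_succ_succ, gb_succ_succ]
        linear_combination q ^ (j+2) * h1 + h2
    · rw [gb_zero q (n+1) (k+1) (by omega), show n + 1 - k = 0 from by omega]
      simp

lemma gb_dual (q : ℂ) (n k : ℕ) :
    gb q (n+1) (k+1) = gb q n (k+1) + q ^ (n - k) * gb q n k := by
  have hB := gb_absorb q n k
  rw [gb_succ_succ]
  linear_combination -hB

/-- Σ_{k=0}^n q^k [n choose k]_{q^2} = ∏_{k=1}^n (1 + q^k), for all complex q. -/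
theorem sum_q_gaussBinom_qsq (q : ℂ) (n : ℕ) :
    ∑ k ∈ Finset.range (n + 1), q ^ k * gb (q ^ 2) n k
      = ∏ k ∈ Finset.range n, (1 + q ^ (k + 1)) := by
  have key : ∀ m : ℕ,
      (∑ k ∈ Finset.range (m + 1), q ^ k * gb (q ^ 2) m k
        = ∏ k ∈ Finset.range m, (1 + q ^ (k + 1))) ∧
      (∑ k ∈ Finset.range (m + 1), q ^ (m - k) * gb (q ^ 2) m k
        = ∏ k ∈ Finset.range m, (1 + q ^ (k + 1))) := by
    intro m
    induction m with
    | zero => simp [gb_zero_right]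
    | succ n ih =>
      obtain ⟨hS, hT⟩ := ih
      have hs0 : ∑ k ∈ Finset.range (n + 1), q ^ (k+1) * gb (q ^ 2) n (k+1)
          = (∏ k ∈ Finset.range n, (1 + q ^ (k + 1))) - 1 := by
        have h := Finset.sum_range_succ' (fun k => q ^ k * gb (q ^ 2) n k) (n+1)
        rw [Finset.sum_range_succ (fun k => q ^ k * gb (q ^ 2) n k) (n+1),
          gb_zero (q^2) n (n+1) (by omega), hS, gb_zero_right] at h
        linear_combination -h
      constructor
      · rw [Finset.sum_range_succ' (fun k => q ^ k * gb (q ^ 2) (n+1) k) (n+1)]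
        have step : ∀ k ∈ Finset.range (n+1),
            q ^ (k+1) * gb (q ^ 2) (n+1) (k+1)
              = q ^ (k+1) * gb (q ^ 2) n (k+1) + q ^ (n+1) * (q ^ (n-k) * gb (q ^ 2) n k) := by
          intro k hk
          rw [Finset.mem_range] at hk
          rw [gb_dual]
          have : q ^ (k+1) * ((q^2) ^ (n-k)) = q ^ (n+1) * q ^ (n-k) := by
            rw [← pow_mul, ← pow_add, ← pow_add]
            congr 1
            omega
          rw [mul_add]
          rw [mul_comm (q ^ (k+1)) ((q^2) ^ (n-k) * gb (q^2) n k), mul_assoc, mul_comm (gb (q^2) n k) (q ^ (k+1)), ← mul_assoc, mul_comm ((q^2)^(n-k)) (q^(k+1)), this]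
          ring
        rw [Finset.sum_congr rfl step, Finset.sum_add_distrib, hs0, ← Finset.mul_sum, hT,
          pow_zero, one_mul, gb_zero_right, Finset.prod_range_succ]
        ring
      · rw [Finset.sum_range_succ' (fun k => q ^ (n + 1 - k) * gb (q ^ 2) (n+1) k) (n+1)]
        have step : ∀ k ∈ Finset.range (n+1),
            q ^ (n + 1 - (k+1)) * gb (q ^ 2) (n+1) (k+1)
              = q ^ (n-k) * gb (q ^ 2) n k + q ^ (n+1) * (q ^ (k+1) * gb (q ^ 2) n (k+1)) := by
          intro k hk
          rw [Finset.mem_range] at hk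
          rw [gb_succ_succ, show n + 1 - (k+1) = n - k from by omega]
          have : q ^ (n-k) * ((q^2) ^ (k+1)) = q ^ (n+1) * q ^ (k+1) := by
            rw [← pow_mul, ← pow_add, ← pow_add]
            congr 1
            omega
          rw [mul_add, ← mul_assoc, this]
          ring
        rw [Finset.sum_congr rfl step, Finset.sum_add_distrib, hT, ← Finset.mul_sum, hs0,
          gb_zero_right, Finset.prod_range_succ, show n + 1 - 0 = n + 1 from rfl]
        ring
  exact (key n).1
end

section
/- For |q| < 1: Σ_{n ≥ 0} q^{n^2} / (q^2;q^2)_n = (q^2;q^4)_∞^2 (q^4;q^4)_∞ / (q;q)_∞. -/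
open Filter Finset Topology

section qPochhammer

variable {x Q : ℂ}

lemma norm_mul_pow_le (hQ : ‖Q‖ ≤ 1) (k : ℕ) : ‖x * Q ^ k‖ ≤ ‖x‖ := by
  rw [norm_mul, norm_pow]
  exact mul_le_of_le_one_right (norm_nonneg x) (pow_le_one₀ (norm_nonneg Q) hQ)

lemma one_sub_mul_pow_ne_zero (hx : ‖x‖ < 1) (hQ : ‖Q‖ ≤ 1) (k : ℕ) : 1 - x * Q ^ k ≠ 0 := by
  intro h
  have h_le := norm_mul_pow_le (x := x) hQ k
  rw [← sub_eq_zero.1 h, norm_one] at h_le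
  linarith

lemma qPoch_succ (x Q : ℂ) (n : ℕ) : qPoch x Q (n + 1) = qPoch x Q n * (1 - x * Q ^ n) :=
  prod_range_succ _ n

lemma qPoch_ne_zero (hx : ‖x‖ < 1) (hQ : ‖Q‖ ≤ 1) (n : ℕ) : qPoch x Q n ≠ 0 :=
  prod_ne_zero_iff.2 fun k _ => one_sub_mul_pow_ne_zero hx hQ k

lemma summable_norm_neg_mul_pow (x : ℂ) (hQ : ‖Q‖ < 1) : Summable fun k : ℕ => ‖-(x * Q ^ k)‖ := by
  simpa [norm_mul, norm_pow] using (summable_geometric_of_lt_one (norm_nonneg Q) hQ).mul_left ‖x‖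

lemma multipliable_one_sub_mul_pow (x : ℂ) (hQ : ‖Q‖ < 1) :
    Multipliable fun k : ℕ => 1 - x * Q ^ k := by
  simpa [sub_eq_add_neg] using multipliable_one_add_of_summable (summable_norm_neg_mul_pow x hQ)

lemma qPochInf_ne_zero (hx : ‖x‖ < 1) (hQ : ‖Q‖ < 1) : qPochInf x Q ≠ 0 := by
  simpa [qPochInf, sub_eq_add_neg] using tprod_one_add_ne_zero_of_summable
    (fun k => by simpa [sub_eq_add_neg] using one_sub_mul_pow_ne_zero hx hQ.le k)
    (summable_norm_neg_mul_pow x hQ)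

lemma qPochInf_eq_mul_qPochInf_sq (x : ℂ) (hQ : ‖Q‖ < 1) :
    qPochInf x Q = qPochInf x (Q ^ 2) * qPochInf (x * Q) (Q ^ 2) := by
  have hQ2 : ‖Q ^ 2‖ < 1 := by rw [norm_pow]; exact pow_lt_one₀ (norm_nonneg Q) hQ two_ne_zero
  have h_even (k : ℕ) : 1 - x * (Q ^ 2) ^ k = 1 - x * Q ^ (2 * k) := by rw [pow_mul]
  have h_odd (k : ℕ) : 1 - x * Q * (Q ^ 2) ^ k = 1 - x * Q ^ (2 * k + 1) := by ring
  unfold qPochInf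
  simp only [h_even, h_odd]
  refine (tprod_even_mul_odd ?_ ?_).symm
  · simpa only [h_even] using multipliable_one_sub_mul_pow x hQ2
  · simpa only [h_odd] using multipliable_one_sub_mul_pow (x * Q) hQ2

lemma qPochInf_neg_mul_qPochInf (x : ℂ) (hQ : ‖Q‖ < 1) :
    qPochInf (-x) Q * qPochInf x Q = qPochInf (x ^ 2) (Q ^ 2) := by
  unfold qPochInf
  rw [← (multipliable_one_sub_mul_pow (-x) hQ).tprod_mul (multipliable_one_sub_mul_pow x hQ)]
  exact tprod_congr fun k => by ring

end qPochhammer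

noncomputable def eulerCoeff (Q : ℂ) (n : ℕ) : ℂ := Q ^ n.choose 2 / qPoch Q Q n

noncomputable def eulerSeries (Q x : ℂ) : ℂ := ∑' n : ℕ, eulerCoeff Q n * x ^ n

section Euler

variable {Q : ℂ}

@[simp]
lemma eulerCoeff_zero : eulerCoeff Q 0 = 1 := by simp [eulerCoeff, qPoch]

lemma eulerCoeff_succ_mul (hQ : ‖Q‖ < 1) (n : ℕ) :
    eulerCoeff Q (n + 1) * (1 - Q ^ (n + 1)) = Q ^ n * eulerCoeff Q n := by
  have h_factor : 1 - Q * Q ^ n ≠ 0 := one_sub_mul_pow_ne_zero hQ hQ.le n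
  have h_poch := qPoch_ne_zero hQ hQ.le n
  rw [eulerCoeff, eulerCoeff, qPoch_succ, Nat.choose_succ_succ', Nat.choose_one_right, pow_succ']
  field_simp
  ring

lemma one_sub_norm_le_norm_one_sub_pow (hQ : ‖Q‖ ≤ 1) (n : ℕ) :
    1 - ‖Q‖ ≤ ‖1 - Q ^ (n + 1)‖ := by
  have h_pow : ‖Q ^ (n + 1)‖ ≤ ‖Q‖ := by simpa [pow_succ'] using norm_mul_pow_le (x := Q) hQ n
  have := norm_sub_norm_le (1 : ℂ) (Q ^ (n + 1))
  rw [norm_one] at this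
  linarith

lemma norm_eulerCoeff_succ_le (hQ : ‖Q‖ < 1) (n : ℕ) :
    ‖eulerCoeff Q (n + 1)‖ ≤ ‖Q‖ ^ n / (1 - ‖Q‖) * ‖eulerCoeff Q n‖ := by
  rw [div_mul_eq_mul_div, le_div_iff₀ (sub_pos.2 hQ)]
  calc ‖eulerCoeff Q (n + 1)‖ * (1 - ‖Q‖)
      ≤ ‖eulerCoeff Q (n + 1)‖ * ‖1 - Q ^ (n + 1)‖ := by
        gcongr; exact one_sub_norm_le_norm_one_sub_pow hQ.le n
    _ = ‖Q‖ ^ n * ‖eulerCoeff Q n‖ := by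
        rw [← norm_mul, eulerCoeff_succ_mul hQ, norm_mul, norm_pow]

lemma summable_norm_eulerCoeff_mul_pow (hQ : ‖Q‖ < 1) (x : ℂ) :
    Summable fun n : ℕ => ‖eulerCoeff Q n * x ^ n‖ := by
  refine summable_of_ratio_norm_eventually_le one_half_lt_one ?_
  have h_ratio : Tendsto (fun n : ℕ => ‖Q‖ ^ n / (1 - ‖Q‖) * ‖x‖) atTop (𝓝 0) := by
    simpa using ((tendsto_pow_atTop_nhds_zero_of_lt_one (norm_nonneg Q) hQ).div_const
      (1 - ‖Q‖)).mul_const ‖x‖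
  filter_upwards [h_ratio.eventually_le_const one_half_pos] with n hn
  simp only [norm_norm, norm_mul, norm_pow]
  calc ‖eulerCoeff Q (n + 1)‖ * ‖x‖ ^ (n + 1)
      ≤ ‖Q‖ ^ n / (1 - ‖Q‖) * ‖eulerCoeff Q n‖ * ‖x‖ ^ (n + 1) := by
        gcongr; exact norm_eulerCoeff_succ_le hQ n
    _ = ‖Q‖ ^ n / (1 - ‖Q‖) * ‖x‖ * (‖eulerCoeff Q n‖ * ‖x‖ ^ n) := by ring
    _ ≤ 1 / 2 * (‖eulerCoeff Q n‖ * ‖x‖ ^ n) := by gcongr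

lemma eulerSeries_eq_one_add_mul (hQ : ‖Q‖ < 1) (x : ℂ) :
    eulerSeries Q x = (1 + x) * eulerSeries Q (Q * x) := by
  have h_summable (y : ℂ) := (summable_norm_eulerCoeff_mul_pow hQ y).of_norm
  have h_diff : eulerSeries Q x - eulerSeries Q (Q * x) = x * eulerSeries Q (Q * x) := by
    rw [eulerSeries, eulerSeries, ← (h_summable x).tsum_sub (h_summable (Q * x)),
      ((h_summable x).sub (h_summable (Q * x))).tsum_eq_zero_add, ← tsum_mul_left]
    simp only [pow_zero, sub_self, zero_add]
    refine tsum_congr fun n => ?_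
    linear_combination x ^ (n + 1) * eulerCoeff_succ_mul hQ n
  linear_combination h_diff

lemma eulerSeries_eq_qPoch_mul (hQ : ‖Q‖ < 1) (x : ℂ) (N : ℕ) :
    eulerSeries Q x = qPoch (-x) Q N * eulerSeries Q (x * Q ^ N) := by
  induction N with
  | zero => simp [qPoch]
  | succ N ih =>
    have h_shift : Q * (x * Q ^ N) = x * Q ^ (N + 1) := by ring
    rw [ih, eulerSeries_eq_one_add_mul hQ, h_shift, qPoch_succ]
    ring

lemma tendsto_eulerSeries_mul_pow (hQ : ‖Q‖ < 1) (x : ℂ) :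
    Tendsto (fun N : ℕ => eulerSeries Q (x * Q ^ N)) atTop (𝓝 1) := by
  have h_lim : Tendsto (fun N : ℕ => x * Q ^ N) atTop (𝓝 0) := by
    simpa using (tendsto_pow_atTop_nhds_zero_of_norm_lt_one hQ).const_mul x
  have h_dom := tendsto_tsum_of_dominated_convergence (summable_norm_eulerCoeff_mul_pow hQ x)
    (fun n => ((continuous_pow n).tendsto 0).comp h_lim |>.const_mul (eulerCoeff Q n))
    (Eventually.of_forall fun N n => ?_)
  · have h_zero : ∑' n : ℕ, eulerCoeff Q n * 0 ^ n = 1 := by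
      rw [tsum_eq_single 0 fun n hn => by simp [hn]]
      simp
    rwa [h_zero] at h_dom
  · show ‖eulerCoeff Q n * (x * Q ^ N) ^ n‖ ≤ _
    rw [norm_mul, norm_mul, norm_pow, norm_pow]
    gcongr
    exact norm_mul_pow_le hQ.le N

theorem eulerSeries_eq_qPochInf (hQ : ‖Q‖ < 1) (x : ℂ) : eulerSeries Q x = qPochInf (-x) Q := by
  have h_prod := (multipliable_one_sub_mul_pow (-x) hQ).hasProd.tendsto_prod_nat
  have h_lim := h_prod.mul (tendsto_eulerSeries_mul_pow hQ x)
  rw [mul_one] at h_lim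
  exact tendsto_nhds_unique ((tendsto_const_nhds (f := atTop)).congr
    (eulerSeries_eq_qPoch_mul hQ x)) h_lim

end Euler

lemma two_mul_choose_two_add_self (n : ℕ) : 2 * n.choose 2 + n = n ^ 2 := by
  induction n with
  | zero => rfl
  | succ n ih => rw [Nat.choose_succ_succ', Nat.choose_one_right]; linarith

lemma tsum_pow_sq_div_qPoch_eq_eulerSeries (q : ℂ) :
    ∑' n : ℕ, q ^ (n ^ 2) / qPoch (q ^ 2) (q ^ 2) n = eulerSeries (q ^ 2) q := by
  refine tsum_congr fun n => ?_
  rw [eulerCoeff, ← two_mul_choose_two_add_self n, pow_add, pow_mul]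
  ring

/-- Identity (32): for `|q| < 1`,
`Σ_{n≥0} q^{n^2} / (q^2;q^2)_n = (q^2;q^4)_∞^2 (q^4;q^4)_∞ / (q;q)_∞`. -/
theorem rr_32 (q : ℂ) (hq : ‖q‖ < 1) :
    ∑' n : ℕ, q ^ (n ^ 2) / qPoch (q ^ 2) (q ^ 2) n
      = qPochInf (q ^ 2) (q ^ 4) ^ 2 * qPochInf (q ^ 4) (q ^ 4) / qPochInf q q := by
  have hq2 : ‖q ^ 2‖ < 1 := by rw [norm_pow]; exact pow_lt_one₀ (norm_nonneg q) hq two_ne_zero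
  rw [eq_div_iff (qPochInf_ne_zero hq hq), tsum_pow_sq_div_qPoch_eq_eulerSeries,
    eulerSeries_eq_qPochInf hq2]
  calc qPochInf (-q) (q ^ 2) * qPochInf q q
      = qPochInf (-q) (q ^ 2) * qPochInf q (q ^ 2) * qPochInf (q ^ 2) (q ^ 2) := by
        rw [qPochInf_eq_mul_qPochInf_sq q hq, ← sq, mul_assoc]
    _ = qPochInf (q ^ 2) (q ^ 4) * (qPochInf (q ^ 2) (q ^ 4) * qPochInf (q ^ 4) (q ^ 4)) := by
        rw [qPochInf_neg_mul_qPochInf q hq2, qPochInf_eq_mul_qPochInf_sq (q ^ 2) hq2]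
        ring_nf
    _ = qPochInf (q ^ 2) (q ^ 4) ^ 2 * qPochInf (q ^ 4) (q ^ 4) := by ring
end
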